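/- arXiv:1904.02810 — 3 statements merged into one kernel-verified Lean document; each statement's English description precedes it below -/
import Mathlib

section
/- Let a, b ∈ ℝ³ with (a₁, a₂) ≠ (b₁, b₂), let c = c_{a,b} and r = r_{a,b}, and let e ∈ ℝ³ with e₃ > 0, e ≠ a, e ≠ b. Then (for every t ∈ T, min(‖t − a‖, ‖t − b‖) < ‖t − e‖) if and only if (there exists β ∈ [0, 1] with (e₁, e₂) = β(a₁, a₂) + (1 − β)(b₁, b₂) and ‖e − c‖ > r). (Theorem 1: the pursuer winning subspace of the two-active-pursuer game is the region of the vertical plane over the segment joining the pursuers' projections lying strictly outside the circle of radius r centered at c.) -/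
noncomputable section

/-- The point of `ℝ³` with the given three coordinates. -/
def mk3 (x y z : ℝ) : EuclideanSpace ℝ (Fin 3) :=
  (WithLp.equiv 2 (Fin 3 → ℝ)).symm ![x, y, z]

/-- The projection of a point onto the target plane `T = {z | z₃ = 0}`. -/
def projT (p : EuclideanSpace ℝ (Fin 3)) : EuclideanSpace ℝ (Fin 3) :=
  mk3 (p 0) (p 1) 0

/-!
For `t` in the plane `T` and a point `c ∈ T`, the difference `‖t - e‖² - ‖t - p‖²` is affine in `t`:
it equals `‖e - c‖² - ‖p - c‖² + 2⟪t - c, p̄ - ē⟫`. Since `c` is equidistant from `a` and `b`,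
the constant term `δ` is the same for both pursuers, so the pursuers win iff the two open
half-planes `{x | 0 < δ + 2⟪x, ā - ē⟫}` and `{x | 0 < δ + 2⟪x, b̄ - ē⟫}` cover `T`. Two such half-planes
cover a space iff `0 < δ` and `0` lies on the segment `[ā - ē, b̄ - ē]`, i.e. `ē ∈ [ā, b̄]`:
otherwise the point `w` of that segment nearest to `0` satisfies `‖w‖² ≤ ⟪w, z⟫` on the whole
segment, so a long enough step in the direction `-w` leaves both half-planes.
-/

open scoped RealInnerProductSpace

theorem isComplete_segment {F : Type*} [NormedAddCommGroup F] [NormedSpace ℝ F] {u v : F} :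
    IsComplete (segment ℝ u v) := by
  rw [← convexHull_pair (𝕜 := ℝ)]
  exact (Set.toFinite {u, v}).isCompact_convexHull ℝ |>.isComplete

section HalfSpaces

variable {E : Type*} [NormedAddCommGroup E] [InnerProductSpace ℝ E]

theorem norm_sub_sq_sub_norm_sub_sq (t c p e : E) :
    ‖t - e‖ ^ 2 - ‖t - p‖ ^ 2 = ‖e - c‖ ^ 2 - ‖p - c‖ ^ 2 + 2 * ⟪t - c, p - e⟫ := by
  rw [show t - e = (t - c) - (e - c) by abel, show t - p = (t - c) - (p - c) by abel,
    show p - e = (p - c) - (e - c) by abel]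
  generalize t - c = x, e - c = y, p - c = z
  rw [norm_sub_sq_real, norm_sub_sq_real, inner_sub_right]
  ring

theorem exists_norm_sq_le_inner_of_zero_notMem {s : Set E} (hne : s.Nonempty)
    (hcomplete : IsComplete s) (hconvex : Convex ℝ s) (h0 : (0 : E) ∉ s) :
    ∃ w ∈ s, w ≠ 0 ∧ ∀ z ∈ s, ‖w‖ ^ 2 ≤ ⟪w, z⟫ := by
  obtain ⟨w, hw, hmin⟩ := exists_norm_eq_iInf_of_complete_convex hne hcomplete hconvex 0
  refine ⟨w, hw, fun hw0 => h0 (hw0 ▸ hw), fun z hz => ?_⟩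
  have := (norm_eq_iInf_iff_real_inner_le_zero hconvex hw).1 hmin z hz
  rw [zero_sub, inner_neg_left, inner_sub_right, real_inner_self_eq_norm_sq] at this
  linarith

theorem forall_pos_add_inner_or_iff (K : Submodule ℝ E) {u v : E} (hu : u ∈ K) (hv : v ∈ K)
    (δ : ℝ) :
    (∀ x ∈ K, 0 < δ + ⟪x, u⟫ ∨ 0 < δ + ⟪x, v⟫) ↔ 0 < δ ∧ (0 : E) ∈ segment ℝ u v := by
  constructor
  · intro h
    have hδ : 0 < δ := by simpa using h 0 K.zero_mem
    refine ⟨hδ, by_contra fun h0 => ?_⟩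
    obtain ⟨w, hw, hw0, hwle⟩ := exists_norm_sq_le_inner_of_zero_notMem
      ⟨u, left_mem_segment ℝ u v⟩ isComplete_segment (convex_segment u v) h0
    have hw2 : 0 < ‖w‖ ^ 2 := by positivity
    have hx : -(δ / ‖w‖ ^ 2) • w ∈ K := K.smul_mem _ (K.convex.segment_subset hu hv hw)
    have hnonpos : ∀ z ∈ segment ℝ u v, δ + ⟪-(δ / ‖w‖ ^ 2) • w, z⟫ ≤ 0 := fun z hz => by
      rw [inner_smul_left, RCLike.conj_to_real, neg_mul, ← sub_eq_add_neg, sub_nonpos,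
        div_mul_eq_mul_div, le_div_iff₀ hw2]
      exact mul_le_mul_of_nonneg_left (hwle z hz) hδ.le
    rcases h _ hx with h' | h'
    · exact (hnonpos u (left_mem_segment ℝ u v)).not_gt h'
    · exact (hnonpos v (right_mem_segment ℝ u v)).not_gt h'
  · rintro ⟨hδ, α, β, hα, hβ, hαβ, hzero⟩ x _
    have hcomb : α * ⟪x, u⟫ + β * ⟪x, v⟫ = 0 := by
      rw [← inner_smul_right, ← inner_smul_right, ← inner_add_right, hzero, inner_zero_right]
    by_contra! hneg
    nlinarith [hneg.1, hneg.2]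

end HalfSpaces

def targetPlane : Submodule ℝ (EuclideanSpace ℝ (Fin 3)) :=
  LinearMap.ker (EuclideanSpace.proj (𝕜 := ℝ) (2 : Fin 3) : EuclideanSpace ℝ (Fin 3) →ₗ[ℝ] ℝ)

theorem mem_targetPlane {x : EuclideanSpace ℝ (Fin 3)} : x ∈ targetPlane ↔ x 2 = 0 := by
  simp [targetPlane]

@[simp] theorem projT_apply (p : EuclideanSpace ℝ (Fin 3)) (i : Fin 3) :
    projT p i = ![p 0, p 1, 0] i := rfl

theorem projT_mem_targetPlane (p : EuclideanSpace ℝ (Fin 3)) : projT p ∈ targetPlane := by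
  simp [mem_targetPlane]

theorem inner_projT_of_mem {x : EuclideanSpace ℝ (Fin 3)} (hx : x ∈ targetPlane)
    (p : EuclideanSpace ℝ (Fin 3)) : ⟪x, projT p⟫ = ⟪x, p⟫ := by
  rw [mem_targetPlane] at hx
  simp [PiLp.inner_apply, Fin.sum_univ_three, hx]

theorem norm_sub_lt_norm_sub_iff_of_mem {t c : EuclideanSpace ℝ (Fin 3)} (ht : t ∈ targetPlane)
    (hc : c ∈ targetPlane) (p e : EuclideanSpace ℝ (Fin 3)) :
    ‖t - p‖ < ‖t - e‖ ↔ 0 < (‖e - c‖ ^ 2 - ‖p - c‖ ^ 2) / 2 + ⟪t - c, projT p - projT e⟫ := by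
  rw [inner_sub_right, inner_projT_of_mem (sub_mem ht hc), inner_projT_of_mem (sub_mem ht hc),
    ← inner_sub_right, ← pow_lt_pow_iff_left₀ (norm_nonneg _) (norm_nonneg _) two_ne_zero,
    ← sub_pos, norm_sub_sq_sub_norm_sub_sq t c p e]
  constructor <;> intro h <;> linarith

theorem zero_mem_segment_projT_sub_iff (a b e : EuclideanSpace ℝ (Fin 3)) :
    (0 : EuclideanSpace ℝ (Fin 3)) ∈ segment ℝ (projT a - projT e) (projT b - projT e) ↔
      ∃ β : ℝ, 0 ≤ β ∧ β ≤ 1 ∧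
        e 0 = β * a 0 + (1 - β) * b 0 ∧ e 1 = β * a 1 + (1 - β) * b 1 := by
  constructor
  · rintro ⟨α, β, hα, hβ, hαβ, h⟩
    have h0 := congr_arg (· 0) h
    have h1 := congr_arg (· 1) h
    simp only [PiLp.add_apply, PiLp.smul_apply, PiLp.sub_apply, projT_apply, smul_eq_mul,
      PiLp.zero_apply, Matrix.cons_val_zero, Matrix.cons_val_one] at h0 h1
    exact ⟨α, hα, by linarith, by linear_combination -h0 + (b 0 - e 0) * hαβ,
      by linear_combination -h1 + (b 1 - e 1) * hαβ⟩
  · rintro ⟨β, hβ0, hβ1, h0, h1⟩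
    refine ⟨β, 1 - β, hβ0, by linarith, by ring, ?_⟩
    ext i
    fin_cases i
    all_goals simp only [Fin.zero_eta, Fin.mk_one, Fin.reduceFinMk, PiLp.add_apply,
      PiLp.smul_apply, PiLp.sub_apply, PiLp.zero_apply, projT_apply, Matrix.cons_val_zero,
      Matrix.cons_val_one, Matrix.cons_val, smul_eq_mul, sub_self, mul_zero, add_zero]
    · linear_combination -h0
    · linear_combination -h1

theorem two_pursuer_winning_general (a b c e : EuclideanSpace ℝ (Fin 3))
    (hcT : c 2 = 0)
    (hceq : ‖c - a‖ = ‖c - b‖) :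
    (∀ t : EuclideanSpace ℝ (Fin 3), t 2 = 0 → min ‖t - a‖ ‖t - b‖ < ‖t - e‖) ↔
    (∃ β : ℝ, 0 ≤ β ∧ β ≤ 1 ∧
      e 0 = β * a 0 + (1 - β) * b 0 ∧ e 1 = β * a 1 + (1 - β) * b 1 ∧
      ‖e - c‖ > ‖a - c‖) := by
  have hc : c ∈ targetPlane := mem_targetPlane.2 hcT
  set δ := (‖e - c‖ ^ 2 - ‖a - c‖ ^ 2) / 2 with hδ
  have hδb : δ = (‖e - c‖ ^ 2 - ‖b - c‖ ^ 2) / 2 := by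
    rw [norm_sub_rev b, ← hceq, norm_sub_rev c]
  have hδpos : 0 < δ ↔ ‖a - c‖ < ‖e - c‖ := by
    rw [hδ, div_pos_iff_of_pos_right two_pos, sub_pos,
      pow_lt_pow_iff_left₀ (norm_nonneg _) (norm_nonneg _) two_ne_zero]
  calc (∀ t : EuclideanSpace ℝ (Fin 3), t 2 = 0 → min ‖t - a‖ ‖t - b‖ < ‖t - e‖)
      ↔ ∀ t ∈ targetPlane, 0 < δ + ⟪t - c, projT a - projT e⟫ ∨
          0 < δ + ⟪t - c, projT b - projT e⟫ := by
        refine forall_congr' fun t => ?_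
        rw [← mem_targetPlane]
        refine imp_congr_right fun ht => ?_
        rw [min_lt_iff, norm_sub_lt_norm_sub_iff_of_mem ht hc,
          norm_sub_lt_norm_sub_iff_of_mem ht hc, ← hδb]
    _ ↔ ∀ x ∈ targetPlane, 0 < δ + ⟪x, projT a - projT e⟫ ∨
          0 < δ + ⟪x, projT b - projT e⟫ :=
        ⟨fun h x hx => by simpa only [add_sub_cancel_right] using h (x + c) (add_mem hx hc),
          fun h t ht => h _ (sub_mem ht hc)⟩
    _ ↔ 0 < δ ∧ (0 : EuclideanSpace ℝ (Fin 3)) ∈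
          segment ℝ (projT a - projT e) (projT b - projT e) :=
        forall_pos_add_inner_or_iff _ (sub_mem (projT_mem_targetPlane a) (projT_mem_targetPlane e))
          (sub_mem (projT_mem_targetPlane b) (projT_mem_targetPlane e)) δ
    _ ↔ _ := by
        rw [hδpos, zero_mem_segment_projT_sub_iff]
        exact ⟨fun ⟨hae, β, hβ⟩ => ⟨β, hβ.1, hβ.2.1, hβ.2.2.1, hβ.2.2.2, hae⟩,
          fun ⟨β, hβ0, hβ1, h0, h1, hae⟩ => ⟨hae, β, hβ0, hβ1, h0, h1⟩⟩

/-- Theorem 1 (pursuer winning subspace): for two active pursuers the pursuer winning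
subspace is the region of the vertical plane over the closed segment joining the pursuers'
projections lying strictly outside the circle of radius `r = ‖a − c‖` centered at
`c = c_{a,b}`. -/
theorem two_pursuer_winning (a b c e : EuclideanSpace ℝ (Fin 3))
    (hab : (a 0, a 1) ≠ (b 0, b 1))
    (hcT : c 2 = 0)
    (hcline : ∃ u : ℝ, c = projT a + u • (projT b - projT a))
    (hceq : ‖c - a‖ = ‖c - b‖)
    (he : e 2 > 0) (hea : e ≠ a) (heb : e ≠ b) :
    (∀ t : EuclideanSpace ℝ (Fin 3), t 2 = 0 → min ‖t - a‖ ‖t - b‖ < ‖t - e‖) ↔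
    (∃ β : ℝ, 0 ≤ β ∧ β ≤ 1 ∧
      e 0 = β * a 0 + (1 - β) * b 0 ∧ e 1 = β * a 1 + (1 - β) * b 1 ∧
      ‖e - c‖ > ‖a - c‖) :=
  two_pursuer_winning_general a b c e hcT hceq
end
end

section
/- Let p₁, p₂, p₃ ∈ ℝ³ be jointly active pursuers whose projections onto T are collinear, with the projection of p_i lying strictly between the projections of p_j and p_k ({i, j, k} = {1, 2, 3}), and let e ∈ ℝ³ with e₃ > 0, e ∉ {p₁, p₂, p₃}. Then (for every t ∈ T, min(‖t − p₁‖, ‖t − p₂‖, ‖t − p₃‖) < ‖t − e‖) if and only if (for every t ∈ T, min(‖t − p_i‖, ‖t − p_j‖) < ‖t − e‖) or (for every t ∈ T, min(‖t − p_i‖, ‖t − p_k‖) < ‖t − e‖). (Theorem 2: for three collinear-projection active pursuers, the pursuer winning subspace is the union of the pursuer winning subspaces of the two pairs containing the middle pursuer.) -/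
noncomputable section

/-- The mirror of a point across the target plane `T = {z | z₃ = 0}`. -/
def mirrorT (p : EuclideanSpace ℝ (Fin 3)) : EuclideanSpace ℝ (Fin 3) :=
  mk3 (p 0) (p 1) (-(p 2))

/-- `c` is the simultaneous-arrival point `c_{a,b}`: the (unique) point of the target
plane on the line through the projections of `a` and `b` that is equidistant from
`a` and `b`. -/
def IsCab (a b c : EuclideanSpace ℝ (Fin 3)) : Prop :=
  c 2 = 0 ∧ (∃ u : ℝ, c = projT a + u • (projT b - projT a)) ∧ ‖c - a‖ = ‖c - b‖

/-- Membership in the pursuer winning subspace `W_P^{a,b}` of the pair `{a, b}`, given the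
simultaneous-arrival point `c = c_{a,b}`. -/
def memWP (a b c z : EuclideanSpace ℝ (Fin 3)) : Prop :=
  z 2 > 0 ∧
  (∃ β : ℝ, 0 ≤ β ∧ β ≤ 1 ∧
    z 0 = β * a 0 + (1 - β) * b 0 ∧ z 1 = β * a 1 + (1 - β) * b 1) ∧
  ‖z - c‖ > ‖a - c‖

/-- Three pursuers are jointly active: for every pair `i ≠ j` their horizontal projections
differ, and neither the remaining pursuer `p_k` nor its mirror across the target plane lies
in the pursuer winning subspace `W_P^{p_i,p_j}` of the pair. -/
def JointlyActive (p : Fin 3 → EuclideanSpace ℝ (Fin 3)) : Prop :=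
  ∀ i j k : Fin 3, i ≠ j → k ≠ i → k ≠ j →
    (p i 0, p i 1) ≠ (p j 0, p j 1) ∧
    ∀ c : EuclideanSpace ℝ (Fin 3), IsCab (p i) (p j) c →
      ¬memWP (p i) (p j) c (p k) ∧ ¬memWP (p i) (p j) c (mirrorT (p k))

/-!
For `t ∈ T`, pursuer `q` beats `e` at `t` iff the affine function
`f_q t = ‖t - e‖² - ‖t - q‖²` is positive. Write `p̄ᵢ = (1 - l) p̄ⱼ + l p̄ₖ` with `0 < l < 1`.
By Stewart's theorem `f_i - (1 - l) f_j - l f_k` is constant on `T`; evaluated at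
`c = c_{pⱼ,pₖ}` it equals `‖c - pⱼ‖² - ‖c - pᵢ‖²`, which is nonnegative because `pᵢ` (or its
mirror) is kept out of `W_P^{pⱼ,pₖ}`. If neither pair covered `T`, there would be points `a`, `b`
with `f_i, f_j ≤ 0` at `a` and `f_i, f_k ≤ 0` at `b`; on the segment `[a, b]` the function `f_j`
has a zero where also `f_i ≤ 0`, hence `f_k ≤ 0`, and `e` wins there.
-/

open AffineMap

section SqDistDiff

variable {F : Type*} [NormedAddCommGroup F] [InnerProductSpace ℝ F]

def sqDistDiff (e q : F) : F →ᵃ[ℝ] ℝ where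
  toFun x := ‖x - e‖ ^ 2 - ‖x - q‖ ^ 2
  linear := innerₛₗ ℝ ((2 : ℝ) • (q - e))
  map_vadd' x v := by
    rw [vadd_eq_add, vadd_eq_add, add_sub_assoc, add_sub_assoc, norm_add_sq_real, norm_add_sq_real,
      innerₛₗ_apply_apply, real_inner_smul_left, inner_sub_left, inner_sub_right, inner_sub_right,
      real_inner_comm q v, real_inner_comm e v]
    ring

theorem sqDistDiff_apply (e q x : F) : sqDistDiff e q x = ‖x - e‖ ^ 2 - ‖x - q‖ ^ 2 := rfl

theorem norm_sub_lt_norm_sub_iff_sqDistDiff_pos {e q x : F} :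
    ‖x - q‖ < ‖x - e‖ ↔ 0 < sqDistDiff e q x := by
  rw [sqDistDiff_apply, sub_pos, sq_lt_sq₀ (norm_nonneg _) (norm_nonneg _)]

end SqDistDiff

theorem AffineMap.pos_or_pos_of_pos_or_pos_or_pos {E : Type*} [AddCommGroup E] [Module ℝ E]
    {s : Set E} (hs : Convex ℝ s) (f g h : E →ᵃ[ℝ] ℝ) {a b : ℝ} (hb : 0 < b)
    (hdom : ∀ x ∈ s, a * g x + b * h x ≤ f x) (hcover : ∀ x ∈ s, 0 < f x ∨ 0 < g x ∨ 0 < h x) :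
    (∀ x ∈ s, 0 < f x ∨ 0 < g x) ∨ (∀ x ∈ s, 0 < f x ∨ 0 < h x) := by
  by_contra! ⟨⟨x, hx, hfx, hgx⟩, ⟨y, hy, hfy, hhy⟩⟩
  have hgy : 0 < g y := by
    rcases hcover y hy with hf | hg | hh
    exacts [absurd hf hfy.not_gt, hg, absurd hh hhy.not_gt]
  set τ := g x / (g x - g y)
  have hτ : τ ∈ Set.Icc (0 : ℝ) 1 := by
    constructor
    · exact div_nonneg_of_nonpos hgx (by linarith)
    · rw [div_le_one_of_neg] <;> linarith
  set z := lineMap x y τ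
  have hgz : g z = 0 := by
    have : g x - g y ≠ 0 := by linarith
    rw [apply_lineMap, lineMap_apply_ring']
    simp only [τ]
    field_simp
    ring
  have hfz : f z ≤ 0 := by
    rw [apply_lineMap, lineMap_apply_ring]
    nlinarith [hτ.1, hτ.2]
  have hhz : h z ≤ 0 := by
    have := hdom z (hs.lineMap_mem hx hy hτ)
    rw [hgz] at this
    nlinarith
  rcases hcover z (hs.lineMap_mem hx hy hτ) with hf | hg | hh <;> linarith

local notation "ℝ³" => EuclideanSpace ℝ (Fin 3)

theorem norm_sq_eq_fin3 (x : ℝ³) : ‖x‖ ^ 2 = x 0 ^ 2 + x 1 ^ 2 + x 2 ^ 2 := by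
  simp [EuclideanSpace.norm_sq_eq, Fin.sum_univ_three]

@[simp] theorem projT_apply_zero (p : ℝ³) : projT p 0 = p 0 := rfl
@[simp] theorem projT_apply_one (p : ℝ³) : projT p 1 = p 1 := rfl
@[simp] theorem projT_apply_two (p : ℝ³) : projT p 2 = 0 := rfl

theorem exists_isCab {a b : ℝ³} (hab : (a 0, a 1) ≠ (b 0, b 1)) : ∃ c, IsCab a b c := by
  set V := (b 0 - a 0) ^ 2 + (b 1 - a 1) ^ 2
  have hV : 0 < V := by
    obtain h | h : a 0 ≠ b 0 ∨ a 1 ≠ b 1 := by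
      by_contra! h; exact hab (by rw [h.1, h.2])
    · have := sq_pos_of_ne_zero (sub_ne_zero.2 h.symm); positivity
    · have := sq_pos_of_ne_zero (sub_ne_zero.2 h.symm); positivity
  -- the parameter `u` solves `u² V + a₂² = (1 - u)² V + b₂²`
  set u := (V + b 2 ^ 2 - a 2 ^ 2) / (2 * V)
  have hu : 2 * u * V = V + b 2 ^ 2 - a 2 ^ 2 := by simp only [u]; field_simp
  refine ⟨projT a + u • (projT b - projT a), by simp, ⟨u, rfl⟩, ?_⟩
  rw [← sq_eq_sq₀ (norm_nonneg _) (norm_nonneg _), norm_sq_eq_fin3, norm_sq_eq_fin3]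
  simp only [PiLp.add_apply, PiLp.sub_apply, PiLp.smul_apply, smul_eq_mul, projT_apply_zero,
    projT_apply_one, projT_apply_two]
  linear_combination hu

theorem norm_mirrorT_sub {z c : ℝ³} (hc : c 2 = 0) : ‖mirrorT z - c‖ = ‖z - c‖ := by
  rw [← sq_eq_sq₀ (norm_nonneg _) (norm_nonneg _), norm_sq_eq_fin3, norm_sq_eq_fin3]
  simp only [PiLp.sub_apply, hc]
  simp [mirrorT, mk3]

theorem norm_sub_le_of_not_memWP {a b c z : ℝ³} {β : ℝ} (hβ0 : 0 ≤ β) (hβ1 : β ≤ 1)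
    (hz0 : z 0 = β * a 0 + (1 - β) * b 0) (hz1 : z 1 = β * a 1 + (1 - β) * b 1) (hz2 : 0 < z 2)
    (hz : ¬memWP a b c z) : ‖z - c‖ ≤ ‖a - c‖ :=
  not_lt.1 fun hlt => hz ⟨hz2, ⟨β, hβ0, hβ1, hz0, hz1⟩, hlt⟩

/-- Stewart's theorem for the horizontal projections, lifted to `ℝ³`. -/
theorem weighted_sq_norm_sub_sub_sq_norm_sub {a b z t : ℝ³} {l : ℝ}
    (hz0 : z 0 = (1 - l) * a 0 + l * b 0) (hz1 : z 1 = (1 - l) * a 1 + l * b 1) (ht : t 2 = 0) :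
    (1 - l) * ‖t - a‖ ^ 2 + l * ‖t - b‖ ^ 2 - ‖t - z‖ ^ 2 =
      l * (1 - l) * ((b 0 - a 0) ^ 2 + (b 1 - a 1) ^ 2) + (1 - l) * a 2 ^ 2 + l * b 2 ^ 2
        - z 2 ^ 2 := by
  simp only [norm_sq_eq_fin3, PiLp.sub_apply, hz0, hz1, ht]
  ring

theorem stewart_defect_nonneg_of_not_memWP {a b c z : ℝ³} {l : ℝ} (hl0 : 0 ≤ l) (hl1 : l ≤ 1)
    (hz0 : z 0 = (1 - l) * a 0 + l * b 0) (hz1 : z 1 = (1 - l) * a 1 + l * b 1)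
    (hc : IsCab a b c) (hz : ¬memWP a b c z) (hz' : ¬memWP a b c (mirrorT z)) :
    0 ≤ l * (1 - l) * ((b 0 - a 0) ^ 2 + (b 1 - a 1) ^ 2) + (1 - l) * a 2 ^ 2 + l * b 2 ^ 2
        - z 2 ^ 2 := by
  obtain ⟨hc2, -, hcab⟩ := hc
  have h1l : 0 ≤ 1 - l := by linarith
  rcases eq_or_ne (z 2) 0 with hzero | hne
  · rw [hzero]
    nlinarith [mul_nonneg (mul_nonneg hl0 h1l)
        (by positivity : 0 ≤ (b 0 - a 0) ^ 2 + (b 1 - a 1) ^ 2),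
      mul_nonneg h1l (sq_nonneg (a 2)), mul_nonneg hl0 (sq_nonneg (b 2))]
  have hle : ‖z - c‖ ≤ ‖a - c‖ := by
    have hz0' : z 0 = (1 - l) * a 0 + (1 - (1 - l)) * b 0 := by rw [hz0]; ring
    have hz1' : z 1 = (1 - l) * a 1 + (1 - (1 - l)) * b 1 := by rw [hz1]; ring
    rcases hne.lt_or_gt with hneg | hpos
    · rw [← norm_mirrorT_sub hc2]
      exact norm_sub_le_of_not_memWP h1l (by linarith) hz0' hz1'
        (by simpa [mirrorT, mk3] using hneg) hz'
    · exact norm_sub_le_of_not_memWP h1l (by linarith) hz0' hz1' hpos hz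
  rw [← weighted_sq_norm_sub_sub_sq_norm_sub hz0 hz1 hc2, ← hcab, norm_sub_rev c a,
    norm_sub_rev c z]
  nlinarith [norm_nonneg (z - c)]

theorem convex_setOf_apply_two_eq_zero : Convex ℝ {t : ℝ³ | t 2 = 0} :=
  convex_hyperplane (EuclideanSpace.proj (2 : Fin 3) : ℝ³ →L[ℝ] ℝ).isLinear 0

theorem exists_coords_of_sbtw_projT {a b z : ℝ³} (h : Sbtw ℝ (projT a) (projT z) (projT b)) :
    ∃ l : ℝ, 0 < l ∧ l < 1 ∧
      z 0 = (1 - l) * a 0 + l * b 0 ∧ z 1 = (1 - l) * a 1 + l * b 1 := by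
  obtain ⟨l, ⟨hl0, hl1⟩, hz⟩ := h.mem_image_Ioo
  have hcoord (m : Fin 3) : projT z m = (1 - l) * projT a m + l * projT b m := by
    rw [← hz, lineMap_apply_module]
    rfl
  exact ⟨l, hl0, hl1, hcoord 0, hcoord 1⟩

theorem collinear_three_pursuer_winning_general (p : Fin 3 → EuclideanSpace ℝ (Fin 3))
    (hactive : JointlyActive p)
    (i j k : Fin 3) (hij : i ≠ j) (hjk : j ≠ k) (hik : i ≠ k)
    (hbtw : Sbtw ℝ (projT (p j)) (projT (p i)) (projT (p k)))
    (e : EuclideanSpace ℝ (Fin 3)) :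
    (∀ t : EuclideanSpace ℝ (Fin 3), t 2 = 0 →
        min ‖t - p i‖ (min ‖t - p j‖ ‖t - p k‖) < ‖t - e‖) ↔
    ((∀ t : EuclideanSpace ℝ (Fin 3), t 2 = 0 → min ‖t - p i‖ ‖t - p j‖ < ‖t - e‖) ∨
      (∀ t : EuclideanSpace ℝ (Fin 3), t 2 = 0 → min ‖t - p i‖ ‖t - p k‖ < ‖t - e‖)) := by
  refine ⟨fun h => ?_, ?_⟩
  · obtain ⟨l, hl0, hl1, hi0, hi1⟩ := exists_coords_of_sbtw_projT hbtw
    obtain ⟨hjk', hW⟩ := hactive j k i hjk hij hik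
    obtain ⟨c, hc⟩ := exists_isCab hjk'
    have hD := stewart_defect_nonneg_of_not_memWP hl0.le hl1.le hi0 hi1 hc (hW c hc).1 (hW c hc).2
    have hdom : ∀ t ∈ {t : ℝ³ | t 2 = 0}, (1 - l) * sqDistDiff e (p j) t +
        l * sqDistDiff e (p k) t ≤ sqDistDiff e (p i) t := fun t ht => by
      have := weighted_sq_norm_sub_sub_sq_norm_sub hi0 hi1 ht
      simp only [sqDistDiff_apply]
      linarith
    simpa only [Set.mem_ofPred_eq, min_lt_iff, norm_sub_lt_norm_sub_iff_sqDistDiff_pos] using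
      AffineMap.pos_or_pos_of_pos_or_pos_or_pos convex_setOf_apply_two_eq_zero _ _ _ hl0 hdom
        (by simpa only [Set.mem_ofPred_eq, min_lt_iff, norm_sub_lt_norm_sub_iff_sqDistDiff_pos]
          using h)
  · rintro (h | h) t ht
    · exact (min_le_min le_rfl (min_le_left _ _)).trans_lt (h t ht)
    · exact (min_le_min le_rfl (min_le_right _ _)).trans_lt (h t ht)

/-- Theorem 2 (pursuer winning subspace): for three jointly active pursuers with collinear
projections, the middle pursuer being `p_i`, the pursuer winning subspace is the union of
the pursuer winning subspaces of the two pairs containing the middle pursuer. -/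
theorem collinear_three_pursuer_winning (p : Fin 3 → EuclideanSpace ℝ (Fin 3))
    (hactive : JointlyActive p)
    (i j k : Fin 3) (hij : i ≠ j) (hjk : j ≠ k) (hik : i ≠ k)
    (hcol : Collinear ℝ ({projT (p i), projT (p j), projT (p k)} :
      Set (EuclideanSpace ℝ (Fin 3))))
    (hbtw : Sbtw ℝ (projT (p j)) (projT (p i)) (projT (p k)))
    (e : EuclideanSpace ℝ (Fin 3)) (he : e 2 > 0) (hne : ∀ m, e ≠ p m) :
    (∀ t : EuclideanSpace ℝ (Fin 3), t 2 = 0 →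
        min ‖t - p i‖ (min ‖t - p j‖ ‖t - p k‖) < ‖t - e‖) ↔
    ((∀ t : EuclideanSpace ℝ (Fin 3), t 2 = 0 → min ‖t - p i‖ ‖t - p j‖ < ‖t - e‖) ∨
      (∀ t : EuclideanSpace ℝ (Fin 3), t 2 = 0 → min ‖t - p i‖ ‖t - p k‖ < ‖t - e‖)) :=
  collinear_three_pursuer_winning_general p hactive i j k hij hjk hik hbtw e
end
end

section
/- Let p₁, p₂, p₃ ∈ ℝ³ be jointly active pursuers whose projections p̄₁, p̄₂, p̄₃ onto T are not collinear, let c be the unique point of T with ‖c − p₁‖ = ‖c − p₂‖ = ‖c − p₃‖, let r = ‖p₁ − c‖, and let S be the convex hull of {p̄₁, p̄₂, p̄₃} in T. Let e ∈ ℝ³ with e₃ > 0, e ∉ {p₁, p₂, p₃}. Then (for every t ∈ T, min(‖t − p₁‖, ‖t − p₂‖, ‖t − p₃‖) < ‖t − e‖) if and only if (‖e − c‖ > r and (e₁, e₂, 0) ∈ S). (Theorem 3: the pursuer winning subspace for three noncollinear-projection active pursuers is the region over the triangle S lying strictly outside the sphere of radius r centered at c.) -/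
noncomputable section

/-! Since the three pursuers lie on the sphere of radius `r` about `c`, for `t` in the target plane
`‖t - pᵢ‖ < ‖t - e‖` is equivalent to `2 ⟪t - c, ē - p̄ᵢ⟫ < ‖e - c‖² - r²`, which is affine in the
horizontal vector `t - c`. Taking `t = c` forces `‖e - c‖ > r`. If `ē` is outside the triangle, a
separating direction, scaled up, violates this inequality for every `i`; if `ē` is inside, every
direction `w` has some vertex with `⟪w, ē - p̄ᵢ⟫ ≤ 0`. -/

open RealInnerProductSpace

section InnerProductSpace

variable {V : Type*} [NormedAddCommGroup V] [InnerProductSpace ℝ V]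

theorem norm_sub_lt_norm_sub_iff_inner_lt (t q e c : V) :
    ‖t - q‖ < ‖t - e‖ ↔ 2 * ⟪t - c, e - q⟫ < ‖e - c‖ ^ 2 - ‖q - c‖ ^ 2 := by
  have hq : ‖t - q‖ ^ 2 = ‖t - c‖ ^ 2 - 2 * ⟪t - c, q - c⟫ + ‖q - c‖ ^ 2 := by
    rw [← norm_sub_sq_real, sub_sub_sub_cancel_right]
  have he : ‖t - e‖ ^ 2 = ‖t - c‖ ^ 2 - 2 * ⟪t - c, e - c⟫ + ‖e - c‖ ^ 2 := by
    rw [← norm_sub_sq_real, sub_sub_sub_cancel_right]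
  have hqe : ⟪t - c, e - q⟫ = ⟪t - c, e - c⟫ - ⟪t - c, q - c⟫ := by
    rw [← inner_sub_right, sub_sub_sub_cancel_right]
  rw [← pow_lt_pow_iff_left₀ (norm_nonneg _) (norm_nonneg _) two_ne_zero, hq, he, hqe]
  constructor <;> intro h <;> linarith

theorem exists_inner_sub_nonpos_of_mem_convexHull {s : Set V} {x : V}
    (hx : x ∈ convexHull ℝ s) (w : V) : ∃ y ∈ s, ⟪w, x - y⟫ ≤ 0 := by
  have hconv : ConvexOn ℝ Set.univ fun z => ⟪w, z⟫ :=
    (innerSL ℝ w).toLinearMap.convexOn convex_univ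
  obtain ⟨y, hy, hxy⟩ := hconv.exists_ge_of_mem_convexHull (Set.subset_univ s) hx
  exact ⟨y, hy, by rw [inner_sub_right]; linarith⟩

theorem exists_inner_sub_gt_of_notMem_convexHull [CompleteSpace V] {s : Set V}
    (hs : s.Finite) {x : V} (hx : x ∉ convexHull ℝ s) (D : ℝ) :
    ∃ w : V, ∀ y ∈ s, D < ⟪w, x - y⟫ := by
  obtain ⟨f, u, hfs, hfx⟩ := geometric_hahn_banach_closed_point (convex_convexHull ℝ s)
    (hs.isCompact_convexHull (𝕜 := ℝ)).isClosed hx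
  set v := (InnerProductSpace.toDual ℝ V).symm f
  have hv : ∀ y ∈ s, f x - u < ⟪v, x - y⟫ := fun y hy => by
    rw [inner_sub_right, InnerProductSpace.toDual_symm_apply, InnerProductSpace.toDual_symm_apply]
    linarith [hfs y (subset_convexHull ℝ s hy)]
  have hε : 0 < f x - u := by linarith
  refine ⟨((|D| + 1) / (f x - u)) • v, fun y hy => ?_⟩
  rw [real_inner_smul_left]
  calc D < (|D| + 1) / (f x - u) * (f x - u) := by
        rw [div_mul_cancel₀ _ hε.ne']; linarith [le_abs_self D]
    _ < (|D| + 1) / (f x - u) * ⟪v, x - y⟫ := by gcongr; exact hv y hy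

theorem forall_exists_inner_sub_lt_iff [CompleteSpace V] {s : Set V} (hs : s.Finite) (x : V)
    (D : ℝ) : (∀ w : V, ∃ y ∈ s, ⟪w, x - y⟫ < D) ↔ 0 < D ∧ x ∈ convexHull ℝ s := by
  constructor
  · intro h
    obtain ⟨y, -, hy⟩ := h 0
    refine ⟨by simpa using hy, ?_⟩
    by_contra hx
    obtain ⟨w, hw⟩ := exists_inner_sub_gt_of_notMem_convexHull hs hx D
    obtain ⟨y, hy, hlt⟩ := h w
    exact (hw y hy).not_gt hlt
  · rintro ⟨hD, hx⟩ w
    obtain ⟨y, hy, hle⟩ := exists_inner_sub_nonpos_of_mem_convexHull hx w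
    exact ⟨y, hy, hle.trans_lt hD⟩

end InnerProductSpace

section TargetPlane

local notation "ℝ³" => EuclideanSpace ℝ (Fin 3)

theorem projT_sub (y z : ℝ³) : projT (y - z) = projT y - projT z := by
  ext i; fin_cases i <;> simp [projT, mk3]

theorem projT_eq_self {w : ℝ³} (hw : w 2 = 0) : projT w = w := by
  ext i; fin_cases i <;> simp [projT, mk3, hw]

theorem projT_projT (w : ℝ³) : projT (projT w) = projT w :=
  projT_eq_self rfl

theorem inner_projT_left (w y : ℝ³) : ⟪projT w, y⟫ = ⟪w, projT y⟫ := by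
  simp [projT, mk3, PiLp.inner_apply, Fin.sum_univ_three]

theorem forall_apply_two_eq_zero_sub_iff_forall_projT {c : ℝ³} (hc : c 2 = 0) {P : ℝ³ → Prop} :
    (∀ t : ℝ³, t 2 = 0 → P (t - c)) ↔ ∀ w, P (projT w) := by
  constructor
  · intro h w
    simpa using h (projT w + c) (by simp [projT, mk3, hc])
  · intro h t ht
    have htc : (t - c) 2 = 0 := by simp [ht, hc]
    simpa [projT_eq_self htc] using h (t - c)

end TargetPlane

theorem noncollinear_three_pursuer_winning_general (p : Fin 3 → EuclideanSpace ℝ (Fin 3))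
    (c : EuclideanSpace ℝ (Fin 3)) (hcT : c 2 = 0)
    (hc1 : ‖c - p 0‖ = ‖c - p 1‖) (hc2 : ‖c - p 1‖ = ‖c - p 2‖)
    (e : EuclideanSpace ℝ (Fin 3)) :
    (∀ t : EuclideanSpace ℝ (Fin 3), t 2 = 0 →
        min ‖t - p 0‖ (min ‖t - p 1‖ ‖t - p 2‖) < ‖t - e‖) ↔
    (‖e - c‖ > ‖p 0 - c‖ ∧
      projT e ∈ convexHull ℝ ({projT (p 0), projT (p 1), projT (p 2)} :
        Set (EuclideanSpace ℝ (Fin 3)))) := by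
  set S : Set (EuclideanSpace ℝ (Fin 3)) := {projT (p 0), projT (p 1), projT (p 2)}
  set D := ‖e - c‖ ^ 2 - ‖p 0 - c‖ ^ 2
  have hr : ∀ i, ‖p i - c‖ = ‖p 0 - c‖ := by
    intro i; fin_cases i <;> simp [norm_sub_rev _ c, hc1, hc2]
  have hcloser : ∀ t : EuclideanSpace ℝ (Fin 3), t 2 = 0 → ∀ i,
      (‖t - p i‖ < ‖t - e‖ ↔ ⟪t - c, projT e - projT (p i)⟫ < D / 2) := by
    intro t ht i
    rw [norm_sub_lt_norm_sub_iff_inner_lt t (p i) e c, hr i, ← projT_sub,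
      ← inner_projT_left, projT_eq_self (by simp [ht, hcT])]
    constructor <;> intro h <;> linarith
  calc _ ↔ ∀ t : EuclideanSpace ℝ (Fin 3), t 2 = 0 →
        ∃ y ∈ S, ⟪t - c, projT e - y⟫ < D / 2 := by
        refine forall₂_congr fun t ht => ?_
        simp only [min_lt_iff, hcloser t ht, S, Set.mem_insert_iff, Set.mem_singleton_iff,
          exists_eq_or_imp, exists_eq_left]
    _ ↔ ∀ w, ∃ y ∈ S, ⟪projT w, projT e - y⟫ < D / 2 :=
        forall_apply_two_eq_zero_sub_iff_forall_projT
          (P := fun u => ∃ y ∈ S, ⟪u, projT e - y⟫ < D / 2) hcT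
    _ ↔ ∀ w, ∃ y ∈ S, ⟪w, projT e - y⟫ < D / 2 := by
        simp only [S, Set.mem_insert_iff, Set.mem_singleton_iff, exists_eq_or_imp, exists_eq_left,
          inner_projT_left, projT_sub, projT_projT]
    _ ↔ 0 < D / 2 ∧ projT e ∈ convexHull ℝ S :=
        forall_exists_inner_sub_lt_iff (Set.toFinite S) _ _
    _ ↔ _ := by
        rw [div_pos_iff_of_pos_right two_pos, sub_pos,
          pow_lt_pow_iff_left₀ (norm_nonneg _) (norm_nonneg _) two_ne_zero]

/-- Theorem 3 (pursuer winning subspace): for three jointly active pursuers with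
noncollinear projections, the pursuer winning subspace is the region over the triangle `S`
spanned by the projections lying strictly outside the sphere of radius `r = ‖p₁ − c‖`
centered at the equidistant point `c`. -/
theorem noncollinear_three_pursuer_winning (p : Fin 3 → EuclideanSpace ℝ (Fin 3))
    (hactive : JointlyActive p)
    (hncol : ¬Collinear ℝ ({projT (p 0), projT (p 1), projT (p 2)} :
      Set (EuclideanSpace ℝ (Fin 3))))
    (c : EuclideanSpace ℝ (Fin 3)) (hcT : c 2 = 0)
    (hc1 : ‖c - p 0‖ = ‖c - p 1‖) (hc2 : ‖c - p 1‖ = ‖c - p 2‖)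
    (e : EuclideanSpace ℝ (Fin 3)) (he : e 2 > 0) (hne : ∀ m, e ≠ p m) :
    (∀ t : EuclideanSpace ℝ (Fin 3), t 2 = 0 →
        min ‖t - p 0‖ (min ‖t - p 1‖ ‖t - p 2‖) < ‖t - e‖) ↔
    (‖e - c‖ > ‖p 0 - c‖ ∧
      projT e ∈ convexHull ℝ ({projT (p 0), projT (p 1), projT (p 2)} :
        Set (EuclideanSpace ℝ (Fin 3)))) :=
  noncollinear_three_pursuer_winning_general p c hcT hc1 hc2 e
end
end
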